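/- arXiv:2604.18498 — 2 statements merged into one kernel-verified Lean document; each statement's English description precedes it below -/
import Mathlib

section
/- Let p be an odd prime and D a squarefree integer with p ∤ D. For every z ∈ ℤ[√D] with N(z) ≡ 1 (mod p), one has z^{p − (D/p)} ≡ 1 (mod p), where (D/p) is the Legendre symbol (so the exponent is p − 1 if D is a quadratic residue mod p and p + 1 if it is a non-residue). -/
/-!
Reduce modulo `p`, i.e. work in any commutative ring `R` of characteristic `p`. There the
Frobenius fixes the integers, and by Euler's criterion
`√D ^ p = D ^ ((p - 1) / 2) • √D = (D/p) • √D`. Hence `z ^ p = z` when `(D/p) = 1` and `z ^ p = z̄` when `(D/p) = -1`; since `z z̄ = N(z) = 1`,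
in either case `z ^ (p - (D/p)) = 1`.
-/

namespace Zsqrtd

section CharP

variable (p : ℕ) [Fact p.Prime] {R : Type*} [CommRing R] [CharP R p]

theorem intCast_pow_char (n : ℤ) : (n : R) ^ p = n := by
  have := congrArg (ZMod.castHom (dvd_refl p) R) (ZMod.pow_card (n : ZMod p))
  rwa [map_pow, map_intCast] at this

theorem intCast_pow_half_eq_legendreSym (a : ℤ) : (a : R) ^ (p / 2) = legendreSym p a := by
  have := congrArg (ZMod.castHom (dvd_refl p) R) (legendreSym.eq_pow p a)
  rwa [map_pow, map_intCast, map_intCast, eq_comm] at this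

variable {p} {D : ℤ} (f : ℤ√D →+* R)

theorem map_sqrtd_pow_char (hp : Odd p) : f sqrtd ^ p = legendreSym p D * f sqrtd := by
  obtain ⟨k, hk⟩ := hp
  have hk' : p / 2 = k := by omega
  rw [← intCast_pow_half_eq_legendreSym, hk', hk, pow_succ, pow_mul, sq, ← map_mul, dmuld,
    map_intCast]

theorem map_eq_re_add_sqrtd_mul_im (z : ℤ√D) : f z = z.re + f sqrtd * z.im := by
  conv_lhs => rw [show z = ⟨z.re, z.im⟩ from rfl, decompose]
  rw [map_add, map_mul, map_intCast, map_intCast]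

theorem map_pow_char (hp : Odd p) (z : ℤ√D) :
    f z ^ p = z.re + legendreSym p D * (f sqrtd * z.im) := by
  rw [map_eq_re_add_sqrtd_mul_im f z, add_pow_char, mul_pow, intCast_pow_char, intCast_pow_char,
    map_sqrtd_pow_char f hp, mul_assoc]

theorem map_pow_char_of_legendreSym_eq_one (hp : Odd p) (h : legendreSym p D = 1) (z : ℤ√D) :
    f z ^ p = f z := by
  rw [map_pow_char f hp, h, map_eq_re_add_sqrtd_mul_im f z, Int.cast_one, one_mul]

theorem map_pow_char_of_legendreSym_eq_neg_one (hp : Odd p) (h : legendreSym p D = -1)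
    (z : ℤ√D) : f z ^ p = f (star z) := by
  rw [map_pow_char f hp, h, map_eq_re_add_sqrtd_mul_im f (star z), re_star, im_star]
  push_cast
  ring

theorem map_pow_sub_legendreSym_eq_one (hp : Odd p) (hpD : ¬(p : ℤ) ∣ D) {z : ℤ√D}
    (hz : (z.norm : R) = 1) : f z ^ ((p : ℤ) - legendreSym p D).toNat = 1 := by
  have hzz : f z * f (star z) = 1 := by
    rw [← map_mul, ← norm_eq_mul_conj, map_intCast, hz]
  have hD : (D : ZMod p) ≠ 0 := by rwa [ne_eq, ZMod.intCast_zmod_eq_zero_iff_dvd]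
  rcases legendreSym.eq_one_or_neg_one p hD with h | h
  · have hp1 : ((p : ℤ) - legendreSym p D).toNat + 1 = p := by
      have := (Fact.out : p.Prime).one_le
      omega
    have hfix : f z ^ ((p : ℤ) - legendreSym p D).toNat * f z = f z := by
      rw [← pow_succ, hp1, map_pow_char_of_legendreSym_eq_one f hp h]
    calc f z ^ ((p : ℤ) - legendreSym p D).toNat
        = f z ^ ((p : ℤ) - legendreSym p D).toNat * f z * f (star z) := by
          rw [mul_assoc, hzz, mul_one]
      _ = 1 := by rw [hfix, hzz]
  · have hp1 : ((p : ℤ) - legendreSym p D).toNat = p + 1 := by omega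
    rw [hp1, pow_succ, map_pow_char_of_legendreSym_eq_neg_one f hp h, mul_comm, hzz]

end CharP

theorem not_isUnit_natCast (D : ℤ) {p : ℕ} (hp : p.Prime) : ¬IsUnit (p : ℤ√D) := by
  rw [isUnit_iff_dvd_one, ← Int.cast_natCast, ← Int.cast_one, intCast_dvd_intCast]
  exact_mod_cast hp.not_dvd_one

end Zsqrtd

theorem stmt_8_general (p : ℕ) [Fact p.Prime] (hpodd : Odd p)
    (D : ℤ) (hpD : ¬ (p : ℤ) ∣ D)
    (z : Zsqrtd D) (hz : (p : ℤ) ∣ (z.norm - 1)) :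
    (p : Zsqrtd D) ∣ (z ^ ((p : ℤ) - legendreSym p D).toNat - 1) := by
  let R := Zsqrtd D ⧸ Ideal.span {(p : Zsqrtd D)}
  have : CharP R p := CharP.quotient _ p (Zsqrtd.not_isUnit_natCast D Fact.out)
  have hzR : (z.norm : R) = 1 := by
    rw [← Int.cast_one, CharP.intCast_eq_intCast R p, Int.modEq_comm, Int.modEq_iff_dvd]
    exact hz
  rw [← Ideal.Quotient.eq_zero_iff_dvd, map_sub, map_pow, map_one, sub_eq_zero]
  exact Zsqrtd.map_pow_sub_legendreSym_eq_one (Ideal.Quotient.mk _) hpodd hpD hzR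

/-- Proposition 5.2: any norm-one element `z` of `ℤ[√D]` modulo an odd prime `p`
satisfies `z^(p − (D/p)) ≡ 1 (mod p)`. -/
theorem stmt_8 (p : ℕ) [Fact p.Prime] (hpodd : Odd p)
    (D : ℤ) (hD : Squarefree D) (hpD : ¬ (p : ℤ) ∣ D)
    (z : Zsqrtd D) (hz : (p : ℤ) ∣ (z.norm - 1)) :
    (p : Zsqrtd D) ∣ (z ^ ((p : ℤ) - legendreSym p D).toNat - 1) :=
  stmt_8_general p hpodd D hpD z hz
end

section
/- Let p be an odd prime and k, ℓ positive integers with p ∤ k, and suppose N = 2·k·p^ℓ − 1 is an odd prime. Let Q be a prime such that the Jacobi symbol (Q/N) = −1, and let w ∈ ℤ[√Q] satisfy N(w) ≡ 1 (mod N). Then at least one of the following holds: (i) w^{2k} ≡ 1 (mod N); or (ii) there exists an integer j with 0 ≤ j < ℓ such that Φ_p(w^{2k·p^{j}}) ≡ 0 (mod N). -/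
/-!
Reduce modulo `N`: since `Q` is a non-residue mod `N`, `ℤ[√Q]/(N)` is the field
`𝔽_N[√Q] = 𝔽_{N²}`, on which the Frobenius `z ↦ z^N` is the conjugation. Hence the image `u` of
`w` satisfies `u^(N+1) = u · ū = N(w) = 1`, i.e. `(u^(2k))^(p^ℓ) = 1`. Either `u^(2k) = 1`, or
some `x = u^(2k·p^j)` with `j < ℓ` has `x ≠ 1 = x^p`; then `x` is a primitive `p`-th root of
unity in a field, so `Φ_p(x) = 0`.
-/

open QuadraticAlgebra

namespace Zsqrtd

variable {d : ℤ} (N : ℕ)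

def reduceMod : ℤ√d →+* QuadraticAlgebra (ZMod N) d 0 :=
  lift ⟨ω, by ext <;> simp⟩

@[simp]
theorem reduceMod_apply (z : ℤ√d) : reduceMod N z = ⟨z.re, z.im⟩ := by
  ext <;> simp [reduceMod]

theorem reduceMod_eq_zero_iff {z : ℤ√d} : reduceMod N z = 0 ↔ (N : ℤ√d) ∣ z := by
  rw [← Int.cast_natCast, intCast_dvd, QuadraticAlgebra.ext_iff]
  simp [ZMod.intCast_zmod_eq_zero_iff_dvd]

theorem reduceMod_aeval (z : ℤ√d) (f : Polynomial ℤ) :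
    reduceMod N (Polynomial.aeval z f) = Polynomial.aeval (reduceMod N z) f :=
  (Polynomial.aeval_algHom_apply (reduceMod N).toIntAlgHom z f).symm

theorem reduceMod_star (z : ℤ√d) : reduceMod N (star z) = star (reduceMod N z) := by
  ext <;> simp

end Zsqrtd

section Frobenius

variable {N : ℕ} [Fact N.Prime]

instance {a b : ZMod N} : CharP (QuadraticAlgebra (ZMod N) a b) N :=
  charP_of_injective_algebraMap algebraMap_injective N

/-- The hypothesis under which Mathlib makes `QuadraticAlgebra (ZMod N) d 0` a field. -/
theorem fact_sq_ne_of_legendreSym_eq_neg_one {d : ℤ} (hd : legendreSym N d = -1) :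
    Fact (∀ r : ZMod N, r ^ 2 ≠ d + 0 * r) :=
  ⟨fun r hr => (legendreSym.eq_neg_one_iff N).1 hd ⟨r, by rw [← sq, hr, zero_mul, add_zero]⟩⟩

theorem QuadraticAlgebra.pow_card_eq_star {d : ℤ} (hN : Odd N) (hd : legendreSym N d = -1)
    (z : QuadraticAlgebra (ZMod N) d 0) : z ^ N = star z := by
  obtain ⟨m, rfl⟩ := hN
  have euler : (d : ZMod (2 * m + 1)) ^ m = -1 := by
    simpa [hd, Nat.mul_add_div] using (legendreSym.eq_pow (2 * m + 1) d).symm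
  have omega_pow : (ω : QuadraticAlgebra (ZMod (2 * m + 1)) d 0) ^ (2 * m + 1) = -ω := by
    rw [pow_succ, pow_mul, sq, omega_mul_omega_eq_algebraMap, map_zero, zero_mul, add_zero,
      ← map_pow, euler, map_neg, map_one, neg_one_mul]
  rw [← mk_eta z, mk_eq_add_smul_omega, add_pow_char, _root_.smul_pow, ← map_pow, ZMod.pow_card,
    ZMod.pow_card, omega_pow]
  ext <;> simp

theorem Zsqrtd.reduceMod_pow_succ_eq_one {d : ℤ} (hN : Odd N) (hd : legendreSym N d = -1)
    {w : ℤ√d} (hw : (N : ℤ) ∣ w.norm - 1) :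
    reduceMod N w ^ (N + 1) = 1 := by
  have hnorm : ((w.norm : ℤ) : ZMod N) = 1 := by
    rwa [← Int.cast_one, ZMod.intCast_eq_intCast_iff_dvd_sub, dvd_sub_comm]
  rw [pow_succ, pow_card_eq_star hN hd, ← reduceMod_star, ← map_mul, mul_comm,
    ← norm_eq_mul_conj, map_intCast,
    ← map_intCast (algebraMap (ZMod N) (QuadraticAlgebra (ZMod N) d 0)), hnorm, map_one]

end Frobenius

theorem aeval_cyclotomic_prime_eq_zero {K : Type*} [CommRing K] [IsDomain K] {p : ℕ}
    [hp : Fact p.Prime] {x : K} (hx : x ^ p = 1) (hx1 : x ≠ 1) :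
    Polynomial.aeval x (Polynomial.cyclotomic p ℤ) = 0 := by
  have hprim : IsPrimitiveRoot x p := orderOf_eq_prime hx hx1 ▸ IsPrimitiveRoot.orderOf x
  simpa [Polynomial.aeval_def, Polynomial.eval₂_eq_eval_map] using
    hprim.isRoot_cyclotomic hp.out.pos

theorem eq_one_or_exists_pow_pow_ne_one_and_pow_pow_succ_eq_one {M : Type*} [Monoid M] {v : M}
    {p : ℕ} : ∀ {ℓ : ℕ}, v ^ p ^ ℓ = 1 → v = 1 ∨ ∃ j < ℓ, v ^ p ^ j ≠ 1 ∧ v ^ p ^ (j + 1) = 1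
  | 0, h => .inl (by simpa using h)
  | ℓ + 1, h => by
    by_cases hℓ : v ^ p ^ ℓ = 1
    · obtain h1 | ⟨j, hj, hne, heq⟩ := eq_one_or_exists_pow_pow_ne_one_and_pow_pow_succ_eq_one hℓ
      exacts [.inl h1, .inr ⟨j, by omega, hne, heq⟩]
    · exact .inr ⟨ℓ, by omega, hℓ, h⟩

theorem stmt_14_general (p : ℕ) (hp : p.Prime)
    (k ℓ : ℕ)
    (N : ℕ) (hN : N = 2 * k * p ^ ℓ - 1) (hNodd : Odd N) (hNprime : N.Prime)
    (Q : ℕ) (hJ : jacobiSym (Q : ℤ) N = -1)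
    (w : Zsqrtd (Q : ℤ))
    (hnorm : (N : ℤ) ∣ (w.norm - 1)) :
    (N : Zsqrtd (Q : ℤ)) ∣ (w ^ (2 * k) - 1) ∨
      ∃ j : ℕ, j < ℓ ∧
        (N : Zsqrtd (Q : ℤ)) ∣
          (Polynomial.aeval (w ^ (2 * k * p ^ j)) (Polynomial.cyclotomic p ℤ)) := by
  have := Fact.mk hNprime
  have := Fact.mk hp
  have hQ : legendreSym N Q = -1 := by rwa [jacobiSym.legendreSym.to_jacobiSym]
  have := fact_sq_ne_of_legendreSym_eq_neg_one hQ
  have hN1 : 2 * k * p ^ ℓ = N + 1 := by have := hNprime.two_le; omega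
  have hu : (Zsqrtd.reduceMod N w ^ (2 * k)) ^ p ^ ℓ = 1 := by
    rw [← pow_mul, hN1, Zsqrtd.reduceMod_pow_succ_eq_one hNodd hQ hnorm]
  simp_rw [← Zsqrtd.reduceMod_eq_zero_iff, Zsqrtd.reduceMod_aeval, map_sub, map_pow, map_one,
    sub_eq_zero]
  obtain h | ⟨j, hj, hne, hpow⟩ := eq_one_or_exists_pow_pow_ne_one_and_pow_pow_succ_eq_one hu
  · exact .inl h
  · refine .inr ⟨j, hj, ?_⟩
    rw [pow_mul]
    exact aeval_cyclotomic_prime_eq_zero (by rwa [← pow_mul, ← pow_succ]) hne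

/-- Theorem 9.3: Miller–Rabin style statement for an odd prime
`N = 2·k·p^ℓ − 1` over `ℤ[√Q]` for a prime `Q` with `(Q/N) = −1`. -/
theorem stmt_14 (p : ℕ) (hp : p.Prime) (hpodd : Odd p)
    (k ℓ : ℕ) (hk : 0 < k) (hℓ : 0 < ℓ) (hpk : ¬ p ∣ k)
    (N : ℕ) (hN : N = 2 * k * p ^ ℓ - 1) (hNodd : Odd N) (hNprime : N.Prime)
    (Q : ℕ) (hQ : Q.Prime) (hJ : jacobiSym (Q : ℤ) N = -1)
    (w : Zsqrtd (Q : ℤ))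
    (hnorm : (N : ℤ) ∣ (w.norm - 1)) :
    (N : Zsqrtd (Q : ℤ)) ∣ (w ^ (2 * k) - 1) ∨
      ∃ j : ℕ, j < ℓ ∧
        (N : Zsqrtd (Q : ℤ)) ∣
          (Polynomial.aeval (w ^ (2 * k * p ^ j)) (Polynomial.cyclotomic p ℤ)) :=
  stmt_14_general p hp k ℓ N hN hNodd hNprime Q hJ w hnorm
end
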